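/- arXiv:1203.4188 — 4 statements merged into one kernel-verified Lean document; each statement's English description precedes it below -/
import Mathlib

section
/- If A ≤ B in the compression order on r-subsets of [n] (i.e., the i-th smallest element of A is at most the i-th smallest element of B for all i), then A can be obtained from B by a finite sequence of ij-compressions C_{ij} with i < j. -/
open Finset

/-- The ij-compression of a finite set: replace j by i if possible. -/
def comp (i j : ℕ) (A : Finset ℕ) : Finset ℕ :=
  if j ∈ A ∧ i ∉ A then insert i (A.erase j) else A

/-- The ij-compression of a family of sets. -/
def compFam (i j : ℕ) (𝒜 : Finset (Finset ℕ)) : Finset (Finset ℕ) :=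
  (𝒜.filter (fun A => comp i j A ∈ 𝒜)) ∪
    ((𝒜.filter (fun A => comp i j A ∉ 𝒜)).image (comp i j))

/-- A family is intersecting if any two members meet. -/
def IsIntersecting (𝒜 : Finset (Finset ℕ)) : Prop :=
  ∀ A ∈ 𝒜, ∀ B ∈ 𝒜, (A ∩ B).Nonempty

/-- A family is left-compressed if it is invariant under all ij-compressions, i < j. -/
def LeftCompressed (𝒜 : Finset (Finset ℕ)) : Prop :=
  ∀ i j : ℕ, 1 ≤ i → i < j → compFam i j 𝒜 = 𝒜

/-- The compression order: same size and the k-th smallest element of `A` is at most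
the k-th smallest element of `B`. -/
def domLE (A B : Finset ℕ) : Prop :=
  A.card = B.card ∧ ∀ (k : ℕ) (a b : ℕ), (A.sort (· ≤ ·))[k]? = some a →
    (B.sort (· ≤ ·))[k]? = some b → a ≤ b

/-- `A ≺ G` : `A` is generated by `G`, i.e. `|G| ≤ |A|` and the k-th smallest element
of `A` is at most the k-th smallest element of `G` for `k ≤ |G|`. -/
def prec (A G : Finset ℕ) : Prop :=
  G.card ≤ A.card ∧ ∀ (k : ℕ) (a g : ℕ), (A.sort (· ≤ ·))[k]? = some a →
    (G.sort (· ≤ ·))[k]? = some g → a ≤ g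

/-- The r-element subsets of [n] = {1, ..., n}. -/
def uniformOn (n r : ℕ) : Finset (Finset ℕ) := (Icc 1 n).powersetCard r

/-- The family ⟨𝒢⟩_r^n generated by 𝒢 under inclusion. -/
def genSub (r n : ℕ) (𝒢 : Finset (Finset ℕ)) : Finset (Finset ℕ) :=
  (uniformOn n r).filter (fun A => ∃ G ∈ 𝒢, G ⊆ A)

open Classical in
/-- The family ⟨𝒢⟩_r^n generated by 𝒢 under ≺. -/
noncomputable def genP (r n : ℕ) (𝒢 : Finset (Finset ℕ)) : Finset (Finset ℕ) :=
  (uniformOn n r).filter (fun A => ∃ G ∈ 𝒢, prec A G)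

/-- ℱ(X) : the members of ℱ meeting X. -/
def hitting (ℱ : Finset (Finset ℕ)) (X : Finset ℕ) : Finset (Finset ℕ) :=
  ℱ.filter (fun A => (A ∩ X).Nonempty)

/-- The star at 1 in [n]^(r). -/
def star (n r : ℕ) : Finset (Finset ℕ) := (uniformOn n r).filter (fun A => 1 ∈ A)

/-- A maximal left-compressed intersecting subfamily of [n]^(r). -/
def MaxLCI (n r : ℕ) (𝒜 : Finset (Finset ℕ)) : Prop :=
  𝒜 ⊆ uniformOn n r ∧ LeftCompressed 𝒜 ∧ IsIntersecting 𝒜 ∧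
    ∀ B ∈ uniformOn n r, B ∉ 𝒜 → ¬ IsIntersecting (insert B 𝒜)

/-- X is good for n and r. -/
def IsGood (n r : ℕ) (X : Finset ℕ) : Prop :=
  ∀ 𝒜 ⊆ uniformOn n r, LeftCompressed 𝒜 → IsIntersecting 𝒜 →
    (hitting 𝒜 X).card ≤ (hitting (star n r) X).card

/-! Compare `A` and `B` by counting: below every threshold `t`, `A` has at least as many
elements as `B`, which follows from `A ≤ B`. If `A ≠ B`, let `b` be the least element of
`B \ A`; counting at `b` yields some `a < b` in `A \ B`, and `C_{ab}(B)` is still above `A`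
while its element sum is smaller, so iterating reaches `A`. -/

theorem Finset.lt_card_filter_le_iff {α : Type*} [LinearOrder α] (s : Finset α) {k : ℕ}
    (h : #s = k) (i : Fin k) (t : α) :
    (i : ℕ) < #{x ∈ s | x ≤ t} ↔ s.orderEmbOfFin h i ≤ t := by
  set f := s.orderEmbOfFin h
  have hmem {x : α} (hx : x ∈ s) : ∃ j, f j = x := by
    rw [← Finset.mem_coe, ← range_orderEmbOfFin s h] at hx
    exact hx
  constructor
  · contrapose!
    intro hti
    calc #{x ∈ s | x ≤ t} ≤ #((Iio i).map f.toEmbedding) := card_le_card fun x hx => by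
          obtain ⟨hxs, hxt⟩ := mem_filter.1 hx
          obtain ⟨j, rfl⟩ := hmem hxs
          exact mem_map_of_mem _ (mem_Iio.2 (f.lt_iff_lt.1 (hxt.trans_lt hti)))
      _ = i := by rw [card_map, Fin.card_Iio]
  · intro hit
    calc (i : ℕ) < #((Iic i).map f.toEmbedding) := by rw [card_map, Fin.card_Iic]; omega
      _ ≤ #{x ∈ s | x ≤ t} := card_le_card fun x hx => by
          obtain ⟨j, hj, rfl⟩ := mem_map.1 hx
          exact mem_filter.2 ⟨orderEmbOfFin_mem s h j, (f.monotone (mem_Iic.1 hj)).trans hit⟩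

def CountingLE (A B : Finset ℕ) : Prop :=
  ∀ t, #{x ∈ B | x ≤ t} ≤ #{x ∈ A | x ≤ t}

theorem countingLE_of_domLE {A B : Finset ℕ} (h : domLE A B) : CountingLE A B := by
  intro t
  obtain ⟨hcard, hsort⟩ := h
  set m := #{x ∈ B | x ≤ t}
  have hm : m ≤ #B := card_filter_le _ _
  rcases Nat.eq_zero_or_pos m with hm0 | hmpos
  · omega
  set i : Fin #B := ⟨m - 1, by omega⟩
  have hB : B.orderEmbOfFin rfl i ≤ t :=
    (B.lt_card_filter_le_iff rfl i t).1 (by change m - 1 < m; omega)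
  have hAB : A.orderEmbOfFin hcard i ≤ B.orderEmbOfFin rfl i :=
    hsort i _ _ (List.getElem?_eq_getElem _) (List.getElem?_eq_getElem _)
  have hA : m - 1 < #{x ∈ A | x ≤ t} := (A.lt_card_filter_le_iff hcard i t).2 (hAB.trans hB)
  omega

theorem comp_of_mem_of_notMem {a b : ℕ} {B : Finset ℕ} (hb : b ∈ B) (ha : a ∉ B) :
    comp a b B = insert a (B.erase b) := if_pos ⟨hb, ha⟩

theorem card_comp (i j : ℕ) (A : Finset ℕ) : #(comp i j A) = #A := by
  unfold comp
  split_ifs with h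
  · rw [card_insert_of_notMem fun hi => h.2 (mem_of_mem_erase hi), card_erase_add_one h.1]
  · rfl

theorem sum_comp_lt {i j : ℕ} {A : Finset ℕ} (hij : i < j) (hj : j ∈ A) (hi : i ∉ A) :
    ∑ x ∈ comp i j A, x < ∑ x ∈ A, x := by
  rw [comp_of_mem_of_notMem hj hi, sum_insert fun h => hi (mem_of_mem_erase h),
    ← add_sum_erase A (fun x => x) hj]
  exact Nat.add_lt_add_right hij _

theorem exists_comp_countingLE {A B : Finset ℕ} (hcard : #A = #B) (hAB : A ≠ B)
    (hdom : CountingLE A B) :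
    ∃ a b, a < b ∧ b ∈ B ∧ a ∉ B ∧ CountingLE A (comp a b B) := by
  have hBA : (B \ A).Nonempty := by
    rw [sdiff_nonempty]
    exact fun hBA => hAB (eq_of_subset_of_card_le hBA hcard.le).symm
  set b := (B \ A).min' hBA
  obtain ⟨hbB, hbA⟩ := mem_sdiff.1 ((B \ A).min'_mem hBA)
  have below_b {x : ℕ} (hx : x ∈ B) (hxb : x < b) : x ∈ A := by
    by_contra hxA
    exact (B \ A).min'_le x (mem_sdiff.2 ⟨hx, hxA⟩) |>.not_gt hxb
  obtain ⟨a, haA, haB, hab⟩ : ∃ a ∈ A, a ∉ B ∧ a < b := by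
    by_contra! hno
    have hsub : {x ∈ A | x ≤ b} ⊆ {x ∈ B | x < b} := fun x hx => by
      obtain ⟨hxA, hxb⟩ := mem_filter.1 hx
      have hxb' : x < b := lt_of_le_of_ne hxb (by rintro rfl; exact hbA hxA)
      exact mem_filter.2 ⟨by_contra fun hxB => (hno x hxA hxB).not_gt hxb', hxb'⟩
    have hssub : {x ∈ B | x < b} ⊂ {x ∈ B | x ≤ b} :=
      (ssubset_iff_of_subset (monotone_filter_right B fun _ _ => le_of_lt)).2
        ⟨b, mem_filter.2 ⟨hbB, le_rfl⟩, fun h => (mem_filter.1 h).2.false⟩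
    exact ((card_le_card hsub).trans_lt (card_lt_card hssub)).not_ge (hdom b)
  refine ⟨a, b, hab, hbB, haB, fun t => ?_⟩
  rw [comp_of_mem_of_notMem hbB haB]
  rcases lt_or_ge t b with htb | hbt
  · refine card_le_card fun x hx => ?_
    obtain ⟨hx, hxt⟩ := mem_filter.1 hx
    refine mem_filter.2 ⟨?_, hxt⟩
    rcases mem_insert.1 hx with rfl | hx
    · exact haA
    · exact below_b (mem_of_mem_erase hx) (hxt.trans_lt htb)
  · have hat : a ≤ t := hab.le.trans hbt
    have hcount : #{x ∈ insert a (B.erase b) | x ≤ t} = #{x ∈ B | x ≤ t} := by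
      rw [filter_insert, if_pos hat, filter_erase,
        card_insert_of_notMem (fun h => haB (mem_of_mem_filter _ (mem_of_mem_erase h))),
        card_erase_add_one (mem_filter.2 ⟨hbB, hbt⟩)]
    exact hcount ▸ hdom t

theorem exists_comp_chain_of_countingLE {A B : Finset ℕ} (hcard : #A = #B)
    (hdom : CountingLE A B) :
    ∃ L : List (ℕ × ℕ), (∀ p ∈ L, p.1 < p.2) ∧
      L.foldl (fun S p => comp p.1 p.2 S) B = A := by
  induction hs : ∑ x ∈ B, x using Nat.strong_induction_on generalizing B with
  | _ s ih =>
    by_cases hAB : A = B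
    · exact ⟨[], by simp, hAB.symm⟩
    obtain ⟨a, b, hab, hbB, haB, hdom'⟩ := exists_comp_countingLE hcard hAB hdom
    obtain ⟨L, hL, hfold⟩ := ih _ (hs ▸ sum_comp_lt hab hbB haB)
      (hcard.trans (card_comp a b B).symm) hdom' rfl
    refine ⟨(a, b) :: L, ?_, hfold⟩
    rintro p (_ | ⟨_, hp⟩)
    exacts [hab, hL p hp]

theorem stmt0_general (A B : Finset ℕ) (h : domLE A B) :
    ∃ L : List (ℕ × ℕ), (∀ p ∈ L, p.1 < p.2) ∧
      L.foldl (fun S p => comp p.1 p.2 S) B = A :=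
  exists_comp_chain_of_countingLE h.1 (countingLE_of_domLE h)

theorem stmt0 (n r : ℕ) (A B : Finset ℕ) (hA : A ∈ uniformOn n r)
    (hB : B ∈ uniformOn n r) (h : domLE A B) :
    ∃ L : List (ℕ × ℕ), (∀ p ∈ L, p.1 < p.2) ∧
      L.foldl (fun S p => comp p.1 p.2 S) B = A :=
  stmt0_general A B h
end

section
/- Let n ≥ 2r and let 𝒢 be a collection of subsets of [2s] each of size at most s, where s ≤ r. If the family of s-subsets of [2s] generated by 𝒢 under the relation ≺ is intersecting, then the family of r-subsets of [n] generated by 𝒢 under ≺ is intersecting. Here A ≺ G means |G| ≤ |A| and the i-th smallest element of A is at most the i-th smallest element of G for 1 ≤ i ≤ |G|. -/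
open Finset

/-- rank: number of elements of `S` that are `≤ x`. -/
def rk (S : Finset ℕ) (x : ℕ) : ℕ := (S.filter (· ≤ x)).card

lemma rk_mono (S : Finset ℕ) {x y : ℕ} (h : x ≤ y) : rk S x ≤ rk S y := by
  apply card_le_card
  intro a ha
  simp only [mem_filter] at *
  exact ⟨ha.1, le_trans ha.2 h⟩

lemma rk_lt_of_mem {S : Finset ℕ} {j x : ℕ} (hj : j ∈ S) (hx : x < j) : rk S x < rk S j := by
  apply card_lt_card
  constructor
  · intro a ha
    simp only [mem_filter] at *
    exact ⟨ha.1, le_trans ha.2 (le_of_lt hx)⟩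
  · intro hsub
    have := hsub (by simp [mem_filter, hj] : j ∈ S.filter (· ≤ j))
    simp only [mem_filter] at this
    omega

lemma rk_injOn (S : Finset ℕ) : Set.InjOn (rk S) S := by
  intro a ha b hb hab
  rcases lt_trichotomy a b with h | h | h
  · exact absurd hab (ne_of_lt (rk_lt_of_mem hb h))
  · exact h
  · exact absurd hab.symm (ne_of_lt (rk_lt_of_mem ha h))

lemma one_le_rk {S : Finset ℕ} {a : ℕ} (ha : a ∈ S) : 1 ≤ rk S a := by
  have : a ∈ S.filter (· ≤ a) := by simp [ha]
  exact card_pos.2 ⟨a, this⟩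

lemma rk_le_card (S : Finset ℕ) (x : ℕ) : rk S x ≤ S.card := card_le_card (filter_subset _ _)

lemma rk_le_self {S : Finset ℕ} (h1 : ∀ a ∈ S, 1 ≤ a) (x : ℕ) : rk S x ≤ x := by
  have : S.filter (· ≤ x) ⊆ Icc 1 x := by
    intro a ha
    simp only [mem_filter, mem_Icc] at *
    exact ⟨h1 a ha.1, ha.2⟩
  simpa [rk] using card_le_card this

lemma image_rk (S : Finset ℕ) : S.image (rk S) = Icc 1 S.card := by
  apply eq_of_subset_of_card_le
  · intro j hj
    simp only [mem_image] at hj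
    obtain ⟨a, ha, rfl⟩ := hj
    exact mem_Icc.2 ⟨one_le_rk ha, rk_le_card S a⟩
  · rw [card_image_of_injOn (rk_injOn S)]
    simp

lemma sort_get?_rank {S : Finset ℕ} {k a : ℕ} (h : (S.sort (· ≤ ·))[k]? = some a) :
    k + 1 ≤ rk S a := by
  set l := S.sort (· ≤ ·) with hl
  obtain ⟨hk, rfl⟩ : ∃ hk : k < l.length, l.get ⟨k, hk⟩ = a := by
    simpa using List.getElem?_eq_some_iff.1 h
  have hlt := List.pairwise_iff_get.1 (List.sortedLT_iff_pairwise.1 S.sortedLT_sort)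
  have key : (univ : Finset (Fin (k+1))).card ≤ rk S (l.get ⟨k, hk⟩) := by
    apply card_le_card_of_injOn
      (fun i => l.get ⟨i.1, lt_of_le_of_lt (Nat.lt_succ_iff.1 i.2) hk⟩)
    · intro i _
      simp only [rk, mem_filter, Finset.mem_coe]
      refine ⟨(Finset.mem_sort _).1 (List.get_mem l _), ?_⟩
      rcases lt_or_eq_of_le (Nat.lt_succ_iff.1 i.2) with hik | hik
      · exact le_of_lt (hlt _ _ hik)
      · simp [hik]
    · intro i _ j _ hij
      by_contra hne
      have : i.1 ≠ j.1 := fun hh => hne (Fin.ext hh)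
      rcases lt_or_gt_of_ne this with hh | hh
      · exact absurd hij (ne_of_lt (hlt _ _ hh))
      · exact absurd hij.symm (ne_of_lt (hlt _ _ hh))
  simpa using key

lemma rank_le_of_sort {S : Finset ℕ} {k a x : ℕ} (h : (S.sort (· ≤ ·))[k]? = some a)
    (hx : k + 1 ≤ rk S x) : a ≤ x := by
  obtain ⟨hk, rfl⟩ : ∃ hk : k < (S.sort (· ≤ ·)).length, (S.sort (· ≤ ·)).get ⟨k, hk⟩ = a := by
    simpa using List.getElem?_eq_some_iff.1 h
  by_contra hcon
  push_neg at hcon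
  have hlt := List.pairwise_iff_get.1 (List.sortedLT_iff_pairwise.1 S.sortedLT_sort)
  have hsub : S.filter (· ≤ x) ⊆
      (range k).image (fun j => (S.sort (· ≤ ·)).getD j 0) := by
    intro y hy
    simp only [mem_filter] at hy
    obtain ⟨j, hj⟩ := List.mem_iff_get.1 ((Finset.mem_sort (α := ℕ) (· ≤ ·)).2 hy.1)
    have hjk : j.1 < k := by
      by_contra hge
      push_neg at hge
      rcases lt_or_eq_of_le hge with hh | hh
      · have := hlt ⟨k, hk⟩ j hh
        omega
      · have hjeq : j = ⟨k, hk⟩ := Fin.ext hh.symm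
        rw [hjeq] at hj
        omega
    simp only [mem_image, mem_range]
    refine ⟨j.1, hjk, ?_⟩
    rw [List.getD_eq_get _ _ j]
    exact hj
  have : rk S x ≤ k := le_trans (card_le_card hsub) (le_trans card_image_le (by simp))
  omega

/-- The bottom-`s` part of a finset. -/
lemma bottom {s : ℕ} {A' : Finset ℕ} (hs : s ≤ A'.card) :
    ∃ A'', A'' ⊆ A' ∧ A''.card = s ∧ ∀ x, min s (rk A' x) ≤ rk A'' x := by
  have hcard : (A'.filter (fun j => rk A' j ≤ s)).card = s := by
    have h0 : ((A'.image (rk A')).filter (· ≤ s)) =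
        (A'.filter (fun j => rk A' j ≤ s)).image (rk A') := Finset.filter_image
    rw [image_rk] at h0
    have h1 : ((Icc 1 A'.card).filter (· ≤ s)).card = s := by
      have he : (Icc 1 A'.card).filter (· ≤ s) = Icc 1 s := by
        ext j
        simp only [mem_filter, mem_Icc]
        omega
      rw [he]
      simp
    rw [h0, card_image_of_injOn ((rk_injOn A').mono
      (Finset.coe_subset.2 (filter_subset _ _)))] at h1
    exact h1
  refine ⟨A'.filter (fun j => rk A' j ≤ s), filter_subset _ _, hcard, ?_⟩
  intro x
  rcases le_or_gt (rk A' x) s with hc | hc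
  · have hsub : A'.filter (· ≤ x) ⊆ (A'.filter (fun j => rk A' j ≤ s)).filter (· ≤ x) := by
      intro j hj
      simp only [mem_filter] at *
      exact ⟨⟨hj.1, le_trans (rk_mono A' hj.2) hc⟩, hj.2⟩
    have := card_le_card hsub
    simp only [rk] at *
    omega
  · have hsub : A'.filter (fun j => rk A' j ≤ s) ⊆
        (A'.filter (fun j => rk A' j ≤ s)).filter (· ≤ x) := by
      intro j hj
      simp only [mem_filter] at *
      refine ⟨hj, ?_⟩
      by_contra hgt
      push_neg at hgt
      have := rk_lt_of_mem hj.1 hgt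
      omega
    have := card_le_card hsub
    simp only [rk] at *
    omega

lemma rk_image_ge {A S : Finset ℕ} (hAS : A ⊆ S) (h1 : ∀ a ∈ S, 1 ≤ a) {m x : ℕ} (hx : x ≤ m) :
    rk A x ≤ rk ((A.image (rk S)).filter (· ≤ m)) x := by
  apply card_le_card_of_injOn (rk S)
  · intro a ha
    simp only [mem_filter, Finset.mem_coe] at ha
    have hra : rk S a ≤ a := rk_le_self h1 a
    simp only [mem_filter, mem_image, Finset.mem_coe]
    exact ⟨⟨⟨a, ha.1, rfl⟩, le_trans hra (le_trans ha.2 hx)⟩, le_trans hra ha.2⟩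
  · apply (rk_injOn S).mono
    intro a ha
    simp only [Finset.coe_filter, Set.mem_setOf_eq] at ha
    exact hAS ha.1

lemma core {s : ℕ} {A B : Finset ℕ} (hd : Disjoint A B) (h1 : ∀ c ∈ A ∪ B, 1 ≤ c)
    (hcard : s ≤ ((A.image (rk (A ∪ B))).filter (· ≤ 2 * s)).card) :
    ∃ A'' B'' : Finset ℕ, A''.card = s ∧ B''.card = s ∧ A'' ⊆ Icc 1 (2 * s) ∧
      B'' ⊆ Icc 1 (2 * s) ∧ Disjoint A'' B'' ∧
      (∀ x, min s (rk A x) ≤ rk A'' x) ∧ (∀ x, min s (rk B x) ≤ rk B'' x) := by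
  set S := A ∪ B with hS
  set A' := (A.image (rk S)).filter (· ≤ 2 * s) with hA'
  set B' := (B.image (rk S)).filter (· ≤ 2 * s) with hB'
  have hA'sub : A' ⊆ Icc 1 (2 * s) := by
    intro j hj
    simp only [hA', mem_filter, mem_image] at hj
    obtain ⟨⟨a, ha, rfl⟩, h2⟩ := hj
    exact mem_Icc.2 ⟨one_le_rk (mem_union_left _ ha), h2⟩
  have hB'sub : B' ⊆ Icc 1 (2 * s) := by
    intro j hj
    simp only [hB', mem_filter, mem_image] at hj
    obtain ⟨⟨b, hb, rfl⟩, h2⟩ := hj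
    exact mem_Icc.2 ⟨one_le_rk (mem_union_right _ hb), h2⟩
  obtain ⟨A'', hA''sub, hA''card, hA''rk⟩ := bottom hcard
  have hA''Icc : A'' ⊆ Icc 1 (2 * s) := fun j hj => hA'sub (hA''sub hj)
  have hB''card : (Icc 1 (2 * s) \ A'').card = s := by
    rw [card_sdiff_of_subset hA''Icc, hA''card]
    simp only [Nat.card_Icc]
    omega
  have hA'B' : Disjoint A' B' := by
    rw [Finset.disjoint_left]
    intro j hjA hjB
    simp only [hA', hB', mem_filter, mem_image] at hjA hjB
    obtain ⟨⟨a, ha, hae⟩, _⟩ := hjA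
    obtain ⟨⟨b, hb, hbe⟩, _⟩ := hjB
    have : a = b := rk_injOn S (mem_union_left _ ha) (mem_union_right _ hb) (hae.trans hbe.symm)
    exact Finset.disjoint_left.1 hd ha (this ▸ hb)
  have hB'sub'' : B' ⊆ Icc 1 (2 * s) \ A'' := by
    intro j hj
    rw [mem_sdiff]
    exact ⟨hB'sub hj, fun hc => Finset.disjoint_left.1 hA'B' (hA''sub hc) hj⟩
  refine ⟨A'', Icc 1 (2 * s) \ A'', hA''card, hB''card, hA''Icc, sdiff_subset, disjoint_sdiff,
    ?_, ?_⟩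
  · intro x
    rcases le_or_gt x (2 * s) with hx | hx
    · have h2 : rk A x ≤ rk A' x := rk_image_ge Finset.subset_union_left h1 hx
      exact le_trans (le_min (min_le_left _ _) (le_trans (min_le_right _ _) h2)) (hA''rk x)
    · have : A''.filter (· ≤ x) = A'' := by
        apply filter_true_of_mem
        intro j hj
        have := mem_Icc.1 (hA''Icc hj)
        omega
      have : rk A'' x = s := by rw [rk, this, hA''card]
      omega
  · intro x
    rcases le_or_gt x (2 * s) with hx | hx
    · have h2 : rk B x ≤ rk B' x := rk_image_ge Finset.subset_union_right h1 hx
      have h3 : rk B' x ≤ rk (Icc 1 (2 * s) \ A'') x :=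
        card_le_card (filter_subset_filter _ hB'sub'')
      omega
    · have he : (Icc 1 (2 * s) \ A'').filter (· ≤ x) = Icc 1 (2 * s) \ A'' := by
        apply filter_true_of_mem
        intro j hj
        have := mem_Icc.1 (mem_sdiff.1 hj).1
        omega
      have : rk (Icc 1 (2 * s) \ A'') x = s := by rw [rk, he, hB''card]
      omega

lemma helper {s r : ℕ} (hsr : s ≤ r) {A B : Finset ℕ} (hd : Disjoint A B)
    (h1 : ∀ c ∈ A ∪ B, 1 ≤ c) (hA : A.card = r) (hB : B.card = r) :
    ∃ A'' B'' : Finset ℕ, A''.card = s ∧ B''.card = s ∧ A'' ⊆ Icc 1 (2 * s) ∧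
      B'' ⊆ Icc 1 (2 * s) ∧ Disjoint A'' B'' ∧
      (∀ x, min s (rk A x) ≤ rk A'' x) ∧ (∀ x, min s (rk B x) ≤ rk B'' x) := by
  set S := A ∪ B with hS
  have hScard : S.card = 2 * r := by
    rw [hS, card_union_of_disjoint hd, hA, hB]
    omega
  have hUnion : (A.image (rk S)).filter (· ≤ 2 * s) ∪ (B.image (rk S)).filter (· ≤ 2 * s)
      = Icc 1 (2 * s) := by
    rw [← filter_union, ← image_union, ← hS, image_rk, hScard]
    ext j
    simp only [mem_filter, mem_Icc]
    omega
  have hA'B' : Disjoint ((A.image (rk S)).filter (· ≤ 2 * s))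
      ((B.image (rk S)).filter (· ≤ 2 * s)) := by
    rw [Finset.disjoint_left]
    intro j hjA hjB
    simp only [mem_filter, mem_image] at hjA hjB
    obtain ⟨⟨a, ha, hae⟩, _⟩ := hjA
    obtain ⟨⟨b, hb, hbe⟩, _⟩ := hjB
    have : a = b := rk_injOn S (mem_union_left _ ha) (mem_union_right _ hb) (hae.trans hbe.symm)
    exact Finset.disjoint_left.1 hd ha (this ▸ hb)
  have hsum : ((A.image (rk S)).filter (· ≤ 2 * s)).card
      + ((B.image (rk S)).filter (· ≤ 2 * s)).card = 2 * s := by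
    rw [← card_union_of_disjoint hA'B', hUnion]
    simp
  rcases le_or_gt s (((A.image (rk S)).filter (· ≤ 2 * s)).card) with hc | hc
  · exact core hd h1 hc
  · have hc' : s ≤ ((B.image (rk (B ∪ A))).filter (· ≤ 2 * s)).card := by
      rw [union_comm B A, ← hS]
      omega
    obtain ⟨B'', A'', h1c, h2c, h3c, h4c, h5c, h6c, h7c⟩ :=
      core hd.symm (by rwa [union_comm B A, ← hS]) hc'
    exact ⟨A'', B'', h2c, h1c, h4c, h3c, h5c.symm, h7c, h6c⟩

lemma mem_genP_of {s r : ℕ} (hsr : s ≤ r) (𝒢 : Finset (Finset ℕ)) {X X'' G : Finset ℕ}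
    (hG : G ∈ 𝒢) (hGcard : G.card ≤ s) (hprec : prec X G) (hX : X.card = r)
    (hX'' : X''.card = s) (hsub : X'' ⊆ Icc 1 (2 * s))
    (hrk : ∀ x, min s (rk X x) ≤ rk X'' x) :
    X'' ∈ genP s (2 * s) 𝒢 := by
  simp only [genP, uniformOn, mem_filter, mem_powersetCard]
  refine ⟨⟨hsub, hX''⟩, G, hG, ⟨by rw [hX'']; exact hGcard, ?_⟩⟩
  intro k a g hka hkg
  have hk : k < G.card := by
    obtain ⟨hlen, _⟩ := List.getElem?_eq_some_iff.1 hkg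
    rwa [Finset.length_sort] at hlen
  have hX1 : k < (X.sort (· ≤ ·)).length := by
    rw [Finset.length_sort, hX]
    omega
  have hget : (X.sort (· ≤ ·))[k]? = some ((X.sort (· ≤ ·)).get ⟨k, hX1⟩) :=
    List.getElem?_eq_getElem hX1
  have hag : (X.sort (· ≤ ·)).get ⟨k, hX1⟩ ≤ g := hprec.2 k _ g hget hkg
  have hrk1 : k + 1 ≤ rk X ((X.sort (· ≤ ·)).get ⟨k, hX1⟩) := sort_get?_rank hget
  have hrk2 : k + 1 ≤ rk X'' ((X.sort (· ≤ ·)).get ⟨k, hX1⟩) := by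
    have := hrk ((X.sort (· ≤ ·)).get ⟨k, hX1⟩)
    omega
  exact le_trans (rank_le_of_sort hka hrk2) hag

theorem stmt4 (n r s : ℕ) (hs : s ≤ r) (hn : 2 * r ≤ n) (𝒢 : Finset (Finset ℕ))
    (h𝒢 : ∀ G ∈ 𝒢, G ⊆ Icc 1 (2 * s) ∧ G.card ≤ s)
    (h : IsIntersecting (genP s (2 * s) 𝒢)) :
    IsIntersecting (genP r n 𝒢) := by
  intro A hA B hB
  by_contra hne
  have hd : Disjoint A B := by
    rw [Finset.disjoint_iff_inter_eq_empty]
    exact not_nonempty_iff_eq_empty.1 hne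
  simp only [genP, uniformOn, mem_filter, Finset.mem_powersetCard] at hA hB
  obtain ⟨⟨hAsub, hAcard⟩, GA, hGA, hprecA⟩ := hA
  obtain ⟨⟨hBsub, hBcard⟩, GB, hGB, hprecB⟩ := hB
  have h1 : ∀ c ∈ A ∪ B, 1 ≤ c := by
    intro c hc
    rcases mem_union.1 hc with hc | hc
    · exact (mem_Icc.1 (hAsub hc)).1
    · exact (mem_Icc.1 (hBsub hc)).1
  obtain ⟨A'', B'', hc1, hc2, hsub1, hsub2, hdis, hrkA, hrkB⟩ := helper hs hd h1 hAcard hBcard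
  have hA'' := mem_genP_of hs 𝒢 hGA (h𝒢 GA hGA).2 hprecA hAcard hc1 hsub1 hrkA
  have hB'' := mem_genP_of hs 𝒢 hGB (h𝒢 GB hGB).2 hprecB hBcard hc2 hsub2 hrkB
  obtain ⟨x, hx⟩ := h A'' hA'' B'' hB''
  rw [mem_inter] at hx
  exact Finset.disjoint_left.1 hdis hx.1 hx.2
end

section
/- The only maximal left-compressed intersecting subfamilies of [n]^(2), for n ≥ 4, are the star {12, 13, ..., 1n} and the triangle {12, 13, 23}. -/
open Finset

/-!
Compressions only move elements of a pair downwards, so a left-compressed family containing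
`{a, b}` contains every pair `{i, j}` with `i < j`, `i ≤ a` and `j ≤ b`. If every member contains `1`,
maximality forces the star. Otherwise some pair avoids `1` and compresses down to `{2, 3}`; a member
`{c, d}` with `c ≥ 4` must then meet `{2, 3}` in `d`, and compressing `d` to `1` yields `{1, c}`,
which misses `{2, 3}`. Hence the family lies inside `[3]^(2)`, and maximality forces the triangle.
-/

theorem mem_uniformOn {n r : ℕ} {A : Finset ℕ} :
    A ∈ uniformOn n r ↔ A ⊆ Icc 1 n ∧ A.card = r :=
  mem_powersetCard

theorem uniformOn_mono {m n : ℕ} (r : ℕ) (hmn : m ≤ n) : uniformOn m r ⊆ uniformOn n r :=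
  powersetCard_mono (Icc_subset_Icc_right hmn)

theorem comp_pair {i j k : ℕ} (hij : i ≠ j) (hik : i ≠ k) (hjk : j ≠ k) :
    comp i j {j, k} = {i, k} := by
  rw [comp, if_pos ⟨mem_insert_self j {k}, by simp [hij, hik]⟩,
    erase_insert (by simpa using hjk)]

theorem comp_mem_uniformOn {n r i j : ℕ} {A : Finset ℕ} (hi : 1 ≤ i) (hij : i < j)
    (hA : A ∈ uniformOn n r) : comp i j A ∈ uniformOn n r := by
  rw [mem_uniformOn] at hA ⊢
  obtain ⟨hAn, hAr⟩ := hA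
  unfold comp
  split_ifs with h
  · have hjn : j ≤ n := (mem_Icc.1 (hAn h.1)).2
    refine ⟨insert_subset (mem_Icc.2 ⟨hi, by omega⟩) ((erase_subset j A).trans hAn), ?_⟩
    rw [card_insert_of_notMem (fun hi' => h.2 (mem_of_mem_erase hi')), card_erase_add_one h.1, hAr]
  · exact ⟨hAn, hAr⟩

theorem one_mem_comp {i j : ℕ} {A : Finset ℕ} (hj : j ≠ 1) (h1 : 1 ∈ A) : 1 ∈ comp i j A := by
  unfold comp
  split_ifs
  exacts [mem_insert_of_mem (mem_erase.2 ⟨hj.symm, h1⟩), h1]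

theorem leftCompressed_iff_forall_comp_mem {𝒜 : Finset (Finset ℕ)} :
    LeftCompressed 𝒜 ↔ ∀ i j, 1 ≤ i → i < j → ∀ A ∈ 𝒜, comp i j A ∈ 𝒜 := by
  constructor
  · intro h i j hi hij A hA
    by_contra hc
    have hmem : comp i j A ∈ compFam i j 𝒜 :=
      mem_union_right _ (mem_image_of_mem _ (mem_filter.2 ⟨hA, hc⟩))
    exact hc (h i j hi hij ▸ hmem)
  · intro h i j hi hij
    rw [compFam, filter_true_of_mem (h i j hi hij),
      filter_false_of_mem (fun A hA => not_not_intro (h i j hi hij A hA)), image_empty, union_empty]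

theorem LeftCompressed.comp_mem {𝒜 : Finset (Finset ℕ)} (h : LeftCompressed 𝒜) {i j : ℕ}
    (hi : 1 ≤ i) (hij : i < j) {A : Finset ℕ} (hA : A ∈ 𝒜) : comp i j A ∈ 𝒜 :=
  leftCompressed_iff_forall_comp_mem.1 h i j hi hij A hA

theorem LeftCompressed.pair_mem_of_le {𝒜 : Finset (Finset ℕ)} (h : LeftCompressed 𝒜)
    {a b i j : ℕ} (hab : a ≠ b) (hp : {a, b} ∈ 𝒜) (hi : 1 ≤ i) (hia : i ≤ a) (hij : i < j)
    (hjb : j ≤ b) : {i, j} ∈ 𝒜 := by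
  have hib : ({i, b} : Finset ℕ) ∈ 𝒜 := by
    rcases hia.eq_or_lt with rfl | hia
    · exact hp
    · simpa only [comp_pair hia.ne (by omega) hab] using h.comp_mem hi hia hp
  rcases hjb.eq_or_lt with rfl | hjb
  · exact hib
  · rw [pair_comm] at hib ⊢
    simpa only [comp_pair hjb.ne hij.ne' (by omega)] using h.comp_mem (hi.trans hij.le) hjb hib

theorem leftCompressed_uniformOn (n r : ℕ) : LeftCompressed (uniformOn n r) :=
  leftCompressed_iff_forall_comp_mem.2 fun _ _ hi hij _ hA => comp_mem_uniformOn hi hij hA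

theorem leftCompressed_star (n r : ℕ) : LeftCompressed (star n r) := by
  refine leftCompressed_iff_forall_comp_mem.2 fun i j hi hij A hA => ?_
  obtain ⟨hAn, h1A⟩ := mem_filter.1 hA
  exact mem_filter.2 ⟨comp_mem_uniformOn hi hij hAn, one_mem_comp (by omega) h1A⟩

theorem IsIntersecting.mono {𝒜 ℬ : Finset (Finset ℕ)} (hℬ : IsIntersecting ℬ) (h : 𝒜 ⊆ ℬ) :
    IsIntersecting 𝒜 :=
  fun A hA B hB => hℬ A (h hA) B (h hB)

theorem isIntersecting_star (n r : ℕ) : IsIntersecting (star n r) :=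
  fun _ hA _ hB => ⟨1, mem_inter.2 ⟨(mem_filter.1 hA).2, (mem_filter.1 hB).2⟩⟩

theorem isIntersecting_uniformOn {n r : ℕ} (h : n < 2 * r) : IsIntersecting (uniformOn n r) := by
  intro A hA B hB
  rw [mem_uniformOn] at hA hB
  have hunion : (A ∪ B).card ≤ n := by
    simpa using card_le_card (union_subset hA.1 hB.1)
  have hsum := card_union_add_card_inter A B
  exact card_pos.1 (by omega)

theorem not_isIntersecting_insert {ℱ : Finset (Finset ℕ)} {B C : Finset ℕ} (hC : C ∈ ℱ)
    (hBC : Disjoint B C) : ¬ IsIntersecting (insert B ℱ) := fun h =>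
  not_nonempty_iff_eq_empty.2 (disjoint_iff_inter_eq_empty.1 hBC)
    (h B (mem_insert_self B ℱ) C (mem_insert_of_mem hC))

theorem MaxLCI.eq_of_subset {n r : ℕ} {𝒜 ℬ : Finset (Finset ℕ)} (h𝒜 : MaxLCI n r 𝒜)
    (hℬ : ℬ ⊆ uniformOn n r) (hℬint : IsIntersecting ℬ) (h : 𝒜 ⊆ ℬ) : 𝒜 = ℬ := by
  refine h.antisymm fun B hB => ?_
  by_contra hB𝒜
  exact h𝒜.2.2.2 B (hℬ hB) hB𝒜 (hℬint.mono (insert_subset hB h))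

theorem maxLCI_star {n : ℕ} (hn : 4 ≤ n) : MaxLCI n 2 (star n 2) := by
  refine ⟨filter_subset _ _, leftCompressed_star n 2, isIntersecting_star n 2, ?_⟩
  intro B hB hBstar
  have h1B : 1 ∉ B := fun h1 => hBstar (mem_filter.2 ⟨hB, h1⟩)
  obtain ⟨hBn, hB2⟩ := mem_uniformOn.1 hB
  -- `[2, n]` has at least three elements, so one of them avoids `B`
  obtain ⟨c, hc⟩ : (Icc 2 n \ B).Nonempty := by
    rw [← card_pos]
    have := le_card_sdiff B (Icc 2 n)
    simp only [Nat.card_Icc, hB2] at this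
    omega
  obtain ⟨hcn, hcB⟩ := mem_sdiff.1 hc
  rw [mem_Icc] at hcn
  have h1c : ({1, c} : Finset ℕ) ∈ star n 2 := by
    refine mem_filter.2 ⟨mem_uniformOn.2 ⟨?_, card_pair (by omega)⟩, mem_insert_self 1 {c}⟩
    simp only [insert_subset_iff, singleton_subset_iff, mem_Icc]
    omega
  refine not_isIntersecting_insert h1c (disjoint_left.2 fun x hxB hx => ?_)
  simp only [mem_insert, mem_singleton] at hx
  rcases hx with rfl | rfl
  exacts [h1B hxB, hcB hxB]

theorem maxLCI_uniformOn_three {n : ℕ} (hn : 3 ≤ n) : MaxLCI n 2 (uniformOn 3 2) := by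
  refine ⟨uniformOn_mono 2 hn, leftCompressed_uniformOn 3 2, isIntersecting_uniformOn (by norm_num),
    ?_⟩
  intro B hB hB3
  obtain ⟨-, hB2⟩ := mem_uniformOn.1 hB
  have hB3' : ¬ B ⊆ Icc 1 3 := fun h => hB3 (mem_uniformOn.2 ⟨h, hB2⟩)
  have hinter : (Icc 1 3 ∩ B).card < B.card :=
    card_lt_card ⟨inter_subset_right, fun h => hB3' (h.trans inter_subset_left)⟩
  obtain ⟨C, hC, hC2⟩ : ∃ C ⊆ Icc 1 3 \ B, C.card = 2 :=
    exists_subset_card_eq (by rw [card_sdiff, inter_comm]; simp only [Nat.card_Icc]; omega)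
  refine not_isIntersecting_insert (C := C) ?_ (disjoint_right.2 fun x hxC => (mem_sdiff.1 (hC hxC)).2)
  exact mem_uniformOn.2 ⟨hC.trans sdiff_subset, hC2⟩

theorem pair_two_three_mem {n : ℕ} {𝒜 : Finset (Finset ℕ)} (hsub : 𝒜 ⊆ uniformOn n 2)
    (hlc : LeftCompressed 𝒜) {A : Finset ℕ} (hA : A ∈ 𝒜) (h1A : 1 ∉ A) : {2, 3} ∈ 𝒜 := by
  obtain ⟨hAn, hA2⟩ := mem_uniformOn.1 (hsub hA)
  obtain ⟨a, b, hab, rfl⟩ := card_eq_two.1 hA2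
  have htwo : ∀ x ∈ ({a, b} : Finset ℕ), 2 ≤ x := fun x hx => by
    have := mem_Icc.1 (hAn hx)
    have : x ≠ 1 := fun h => h1A (h ▸ hx)
    omega
  have ha := htwo a (mem_insert_self a {b})
  have hb := htwo b (mem_insert_of_mem (mem_singleton_self b))
  rcases hab.lt_or_gt with hab' | hab'
  · exact hlc.pair_mem_of_le hab hA (by norm_num) ha (by norm_num) (by omega)
  · exact hlc.pair_mem_of_le hab.symm (pair_comm a b ▸ hA) (by norm_num) hb (by norm_num) (by omega)

theorem subset_uniformOn_three {n : ℕ} {𝒜 : Finset (Finset ℕ)} (hsub : 𝒜 ⊆ uniformOn n 2)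
    (hlc : LeftCompressed 𝒜) (hint : IsIntersecting 𝒜) (h23 : {2, 3} ∈ 𝒜) :
    𝒜 ⊆ uniformOn 3 2 := by
  intro A hA
  obtain ⟨hAn, hA2⟩ := mem_uniformOn.1 (hsub hA)
  refine mem_uniformOn.2 ⟨fun c hc => mem_Icc.2 ⟨(mem_Icc.1 (hAn hc)).1, ?_⟩, hA2⟩
  by_contra! hc4
  obtain ⟨d, hd⟩ := hint A hA _ h23
  obtain ⟨hdA, hd23⟩ := mem_inter.1 hd
  have hd23' : d = 2 ∨ d = 3 := by simpa using hd23
  have hdc : d ≠ c := by omega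
  have hA' : A = {d, c} :=
    (eq_of_subset_of_card_le (insert_subset hdA (singleton_subset_iff.2 hc))
      (by rw [hA2, card_pair hdc])).symm
  have h1c : ({1, c} : Finset ℕ) ∈ 𝒜 :=
    hlc.pair_mem_of_le hdc (hA' ▸ hA) le_rfl (by omega) (by omega) le_rfl
  obtain ⟨e, he⟩ := hint _ h1c _ h23
  simp only [mem_inter, mem_insert, mem_singleton] at he
  omega

theorem stmt5 (n : ℕ) (hn : 4 ≤ n) (𝒜 : Finset (Finset ℕ)) :
    MaxLCI n 2 𝒜 ↔ (𝒜 = star n 2 ∨ 𝒜 = ({{1, 2}, {1, 3}, {2, 3}} : Finset (Finset ℕ))) := by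
  have htriangle : ({{1, 2}, {1, 3}, {2, 3}} : Finset (Finset ℕ)) = uniformOn 3 2 := by decide
  rw [htriangle]
  constructor
  · intro h
    have ⟨hsub, hlc, hint, _⟩ := h
    by_cases h1 : ∀ A ∈ 𝒜, 1 ∈ A
    · exact Or.inl (h.eq_of_subset (filter_subset _ _) (isIntersecting_star n 2)
        fun A hA => mem_filter.2 ⟨hsub hA, h1 A hA⟩)
    · push Not at h1
      obtain ⟨A, hA, h1A⟩ := h1
      have h23 := pair_two_three_mem hsub hlc hA h1A
      exact Or.inr (h.eq_of_subset (uniformOn_mono 2 (by omega)) (isIntersecting_uniformOn (by norm_num))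
        (subset_uniformOn_three hsub hlc hint h23))
  · rintro (rfl | rfl)
    exacts [maxLCI_star hn, maxLCI_uniformOn_three (by omega)]
end

section
/- Let r ≥ 2, n ≥ 2r, let 𝒢 be a collection of subsets of [2r] of size at most r, and X ⊆ [2, 2r]. Then |{A ∈ ⟨𝒢⟩_r^n : A ∩ X ≠ ∅}| = Σ_{i=1}^{r} |{B ∈ ⟨𝒢⟩_i^{2r} : B ∩ X ≠ ∅ and B is ≺-witnessing}| · C(n − 2r, r − i), where ⟨𝒢⟩_i^{2r} = {B ∈ [2r]^(i) : B ≺ G for some G ∈ 𝒢} and the sum counts each A ∈ ⟨𝒢⟩_r^n(X) exactly once via its initial segment inside [2r]. -/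
open Finset

/-!
Split each `A ∈ ⟨𝒢⟩_r^n` into its initial segment `B = A ∩ [2r]` and its tail `A \ [2r]`.
Since every generator lies in `[2r]`, whether `A ≺ G` only depends on `B`, and since
`X ⊆ [2r]`, so does whether `A` meets `X`. Hence the members with `|B| = i` are exactly the
pairs of some `B ∈ ⟨𝒢⟩_i^{2r}(X)` with an arbitrary `(r - i)`-subset of `[2r + 1, n]`; and
`i ≥ 1` because `A` meets `X ⊆ [2r]`.
-/

lemma Finset.sort_union_of_forall_lt {α : Type*} [LinearOrder α] {B C : Finset α} (h : ∀ b ∈ B, ∀ c ∈ C, b < c) :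
    (B ∪ C).sort (· ≤ ·) = B.sort (· ≤ ·) ++ C.sort (· ≤ ·) := by
  have hBC : Disjoint B C :=
    disjoint_left.2 fun a haB haC => (h a haB a haC).false
  have hperm : List.Perm ((B ∪ C).sort (· ≤ ·)) (B.sort (· ≤ ·) ++ C.sort (· ≤ ·)) := by
    rw [← Multiset.coe_eq_coe, ← Multiset.coe_add, sort_eq, sort_eq,
      sort_eq, ← disjUnion_eq_union B C hBC, disjUnion_val]
  have hsorted : (B.sort (· ≤ ·) ++ C.sort (· ≤ ·)).Pairwise (· ≤ ·) :=
    List.pairwise_append.2 ⟨pairwise_sort _ _, pairwise_sort _ _,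
      fun b hb c hc => (h b (by simpa using hb) c (by simpa using hc)).le⟩
  exact hperm.eq_of_pairwise' (pairwise_sort _ _) hsorted

lemma prec_union_iff {B C G : Finset ℕ} (hBC : ∀ b ∈ B, ∀ c ∈ C, b < c)
    (hGC : ∀ g ∈ G, ∀ c ∈ C, g < c) : prec (B ∪ C) G ↔ prec B G := by
  have hsort := sort_union_of_forall_lt hBC
  constructor
  · rintro ⟨hcard, hle⟩
    have hGB : G.card ≤ B.card := by
      by_contra! hBG
      -- Compare position `|B|`: there `B ∪ C` has an element of `C`, which lies above all of `G`.
      have hlt : B.card < ((B ∪ C).sort (· ≤ ·)).length := by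
        rw [length_sort]; exact hBG.trans_le hcard
      have hltG : B.card < (G.sort (· ≤ ·)).length := by rwa [length_sort]
      have ha : ((B ∪ C).sort (· ≤ ·))[B.card] ∈ C := by
        simp only [hsort, List.getElem_append_right (by simp : (B.sort (· ≤ ·)).length ≤ B.card)]
        exact (mem_sort _).1 (List.getElem_mem _)
      have hg : (G.sort (· ≤ ·))[B.card] ∈ G := (mem_sort _).1 (List.getElem_mem hltG)
      exact absurd (hle _ _ _ (List.getElem?_eq_getElem hlt) (List.getElem?_eq_getElem hltG))
        (not_le.2 (hGC _ hg _ ha))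
    refine ⟨hGB, fun k a g ha hg => hle k a g ?_ hg⟩
    rw [hsort, List.getElem?_append_left (List.getElem?_eq_some_iff.1 ha).1]
    exact ha
  · rintro ⟨hGB, hle⟩
    refine ⟨hGB.trans (card_le_card subset_union_left), fun k a g ha hg => ?_⟩
    have hkG : k < G.card := by simpa using (List.getElem?_eq_some_iff.1 hg).1
    rw [hsort, List.getElem?_append_left (by simp; omega)] at ha
    exact hle k a g ha hg

lemma card_filter_powersetCard_card_inter_eq {α : Type*} [DecidableEq α] {U S : Finset α}
    (hSU : S ⊆ U) {P : Finset α → Prop} [DecidablePred P] (hP : ∀ A ⊆ U, P A ↔ P (A ∩ S))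
    {r i : ℕ} (hi : i ≤ r) :
    (((U.powersetCard r).filter P).filter fun A => (A ∩ S).card = i).card =
      ((S.powersetCard i).filter P).card * (U \ S).card.choose (r - i) := by
  rw [← card_powersetCard, ← card_product]
  refine card_nbij' (fun A => (A ∩ S, A \ S)) (fun p => p.1 ∪ p.2) ?_ ?_ ?_ ?_
  · intro A hA
    simp only [coe_filter, mem_filter, mem_powersetCard,
      Set.mem_ofPred_eq] at hA
    obtain ⟨⟨⟨hAU, hAr⟩, hPA⟩, hAi⟩ := hA
    simp only [coe_product, coe_filter, mem_powersetCard,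
      Set.mem_prod, Set.mem_ofPred_eq, mem_coe]
    refine ⟨⟨⟨inter_subset_right, hAi⟩, (hP A hAU).1 hPA⟩,
      sdiff_subset_sdiff hAU le_rfl, ?_⟩
    rw [← sdiff_inter_self_right, inter_comm,
      card_sdiff_of_subset inter_subset_left, hAr, hAi]
  · rintro ⟨B, C⟩ hBC
    simp only [coe_product, coe_filter, mem_powersetCard,
      Set.mem_prod, Set.mem_ofPred_eq, mem_coe] at hBC
    obtain ⟨⟨⟨hBS, hBi⟩, hPB⟩, hCUS, hCr⟩ := hBC
    have hCS : Disjoint C S := disjoint_of_subset_left hCUS sdiff_disjoint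
    have hinter : (B ∪ C) ∩ S = B := by
      rw [union_inter_distrib_right, inter_eq_left.2 hBS,
        disjoint_iff_inter_eq_empty.1 hCS, union_empty]
    have hunion : B ∪ C ⊆ U :=
      union_subset (hBS.trans hSU) (hCUS.trans sdiff_subset)
    simp only [coe_filter, mem_filter, mem_powersetCard, Set.mem_ofPred_eq]
    refine ⟨⟨⟨hunion, ?_⟩, (hP _ hunion).2 (by rwa [hinter])⟩, by rwa [hinter]⟩
    rw [card_union_of_disjoint (disjoint_of_subset_left hBS hCS.symm), hBi, hCr]
    omega
  · intro A _
    exact sup_inf_sdiff A S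
  · rintro ⟨B, C⟩ hBC
    simp only [coe_product, coe_filter, mem_powersetCard,
      Set.mem_prod, Set.mem_ofPred_eq, mem_coe] at hBC
    obtain ⟨⟨⟨hBS, -⟩, -⟩, hCUS, -⟩ := hBC
    have hCS : Disjoint C S := disjoint_of_subset_left hCUS sdiff_disjoint
    ext1
    · simp [union_inter_distrib_right, inter_eq_left.2 hBS,
        disjoint_iff_inter_eq_empty.1 hCS]
    · simp [union_sdiff_distrib, sdiff_eq_empty_iff_subset.2 hBS,
        hCS.sdiff_eq_left]

lemma prec_inter_iff {A G S : Finset ℕ} (hGS : G ⊆ S) (hS : ∀ s ∈ S, ∀ a ∈ A \ S, s < a) :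
    prec (A ∩ S) G ↔ prec A G := by
  rw [← prec_union_iff (fun b hb => hS b (inter_subset_right hb)) (fun g hg => hS g (hGS hg)),
    union_comm, sdiff_union_inter]

open Classical in
lemma hitting_genP_eq_filter (r n : ℕ) (𝒢 : Finset (Finset ℕ)) (X : Finset ℕ) :
    hitting (genP r n 𝒢) X =
      ((Icc 1 n).powersetCard r).filter fun A => (∃ G ∈ 𝒢, prec A G) ∧ (A ∩ X).Nonempty := by
  rw [hitting, genP, uniformOn, filter_filter]

theorem stmt10_general (n r : ℕ) (hn : 2 * r ≤ n) (𝒢 : Finset (Finset ℕ))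
    (h𝒢 : ∀ G ∈ 𝒢, G ⊆ Icc 1 (2 * r) ∧ G.card ≤ r) (X : Finset ℕ)
    (hX : X ⊆ Icc 2 (2 * r)) :
    (hitting (genP r n 𝒢) X).card =
      ∑ i ∈ Icc 1 r, (hitting (genP i (2 * r) 𝒢) X).card * Nat.choose (n - 2 * r) (r - i) := by
  classical
  have hSU : Icc 1 (2 * r) ⊆ Icc 1 n := Finset.Icc_subset_Icc_right hn
  have hXS : X ⊆ Icc 1 (2 * r) := hX.trans (Finset.Icc_subset_Icc_left (by norm_num))
  have hP : ∀ A ⊆ Icc 1 n, ((∃ G ∈ 𝒢, prec A G) ∧ (A ∩ X).Nonempty) ↔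
      ((∃ G ∈ 𝒢, prec (A ∩ Icc 1 (2 * r)) G) ∧ (A ∩ Icc 1 (2 * r) ∩ X).Nonempty) := by
    intro A hAU
    have hS : ∀ s ∈ Icc 1 (2 * r), ∀ a ∈ A \ Icc 1 (2 * r), s < a := by
      intro s hs a ha
      have := mem_Icc.1 (hAU (mem_sdiff.1 ha).1)
      simp only [mem_sdiff, mem_Icc] at hs ha
      omega
    rw [inter_right_comm, inter_assoc, inter_eq_left.2 hXS]
    exact and_congr_left' <| exists_congr fun G =>
      and_congr_right fun hG => (prec_inter_iff (h𝒢 G hG).1 hS).symm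
  have hfiber : ∀ A ∈ hitting (genP r n 𝒢) X, (A ∩ Icc 1 (2 * r)).card ∈ Icc 1 r := by
    intro A hA
    simp only [hitting_genP_eq_filter, mem_filter, mem_powersetCard] at hA
    obtain ⟨⟨-, hAr⟩, -, hAX⟩ := hA
    exact mem_Icc.2 ⟨card_pos.2 (hAX.mono (inter_subset_inter_left hXS)),
      hAr ▸ card_le_card inter_subset_left⟩
  rw [card_eq_sum_card_fiberwise hfiber]
  refine sum_congr rfl fun i hi => ?_
  rw [hitting_genP_eq_filter, card_filter_powersetCard_card_inter_eq hSU hP (mem_Icc.1 hi).2,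
    card_sdiff_of_subset hSU, Nat.card_Icc, Nat.card_Icc, Nat.add_sub_cancel, Nat.add_sub_cancel,
    hitting_genP_eq_filter]

theorem stmt10 (n r : ℕ) (hr : 2 ≤ r) (hn : 2 * r ≤ n) (𝒢 : Finset (Finset ℕ))
    (h𝒢 : ∀ G ∈ 𝒢, G ⊆ Icc 1 (2 * r) ∧ G.card ≤ r) (X : Finset ℕ)
    (hX : X ⊆ Icc 2 (2 * r)) :
    (hitting (genP r n 𝒢) X).card =
      ∑ i ∈ Icc 1 r, (hitting (genP i (2 * r) 𝒢) X).card * Nat.choose (n - 2 * r) (r - i) :=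
  stmt10_general n r hn 𝒢 h𝒢 X hX
end
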